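/- Let m ≥ 2 be an integer with m ≡ 1 (mod 6), let f(x) = x^m on ℤ_3, and let t = ν_3(m − 1). For each integer l ≥ 0, each i ∈ {1, 2}, each a ∈ {0, 1, …, 3^(t−1) − 1}, and each sign ε ∈ {1, −1}, set M_{l,a,i,ε} = ε + 3^(l+1)·i + 3^(l+2)·a + 3^(t+l+1)ℤ_3. Then the sets M_{l,a,i,ε} are pairwise disjoint clopen subsets of ℤ_3, each M_{l,a,i,ε} is a minimal component of f (f(M_{l,a,i,ε}) ⊆ M_{l,a,i,ε} and every forward orbit of f in M_{l,a,i,ε} is dense in M_{l,a,i,ε}), and the union of all the M_{l,a,i,ε} together with the fixed-point set {1, −1} equals the set of 3-adic units ℤ_3 \ 3ℤ_3. -/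

import Mathlib

/-!
Lifting the exponent: for an odd prime `p` and `v_p(g - 1) = E ≥ 1`,
`v_p(g^d - 1) = E + v_p(d)`. Hence `j ↦ g^j` is injective on `[0, p^R)` modulo `p^(E+R)`, and
since `1 + p^E ℤ_p` has only `p^R` classes modulo `p^(E+R)`, the powers of `g` are dense in
`1 + p^E ℤ_p`.

Write a point of `M = ε + 3^(l+1)(i + 3a) + 3^(t+l+1) ℤ_3` as `x = ε u`, so that
`v_3(u - 1) = l + 1`. Density applied to `m` (with `E = t`) makes the exponents `m^n`
approximate every `1 + 3^t j`, and applied to `g = u^(3^t)` (with `E = t + l + 1`) it makes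
`u^(1 + 3^t j) = u g^j` run densely through `u (1 + 3^(t+l+1) ℤ_3)`, which is `ε M`.
Invariance is the estimate `x^m ≡ x (mod 3^(t+l+1))`. Finally every unit is `≡ ±1 (mod 3)`,
and `ε`, `l + 1 = v_3(x - ε)` and the class of `(x - ε) / 3^(l+1)` modulo `3^t` recover the
indices of the set containing `x`.
-/

theorem pow_eq_self_of_mul_self_eq_one {M : Type*} [Monoid M] {ε : M} (hε : ε * ε = 1) {n : ℕ}
    (hn : Odd n) : ε ^ n = ε := by
  obtain ⟨k, rfl⟩ := hn
  rw [pow_succ, pow_mul, sq, hε, one_pow, one_mul]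

namespace PadicInt

variable {p : ℕ} [Fact p.Prime]

theorem pow_dvd_sub_iff_toZModPow_eq {x y : ℤ_[p]} {n : ℕ} :
    (p : ℤ_[p]) ^ n ∣ x - y ↔ toZModPow n x = toZModPow n y := by
  rw [← Ideal.mem_span_singleton, ← ker_toZModPow, RingHom.sub_mem_ker_iff]

theorem pow_dvd_natCast_sub_natCast_iff {n a b : ℕ} :
    (p : ℤ_[p]) ^ n ∣ (a : ℤ_[p]) - b ↔ a ≡ b [MOD p ^ n] := by
  have h := pow_p_dvd_int_iff (p := p) n ((a : ℤ) - b)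
  push_cast at h
  rw [h, Nat.ModEq.comm, Nat.modEq_iff_dvd]
  push_cast
  rfl

theorem p_dvd_natCast_iff {a : ℕ} : (p : ℤ_[p]) ∣ a ↔ p ∣ a := by
  simpa [Nat.modEq_zero_iff_dvd] using
    pow_dvd_natCast_sub_natCast_iff (p := p) (n := 1) (a := a) (b := 0)

theorem emultiplicity_natCast_sub_one {m : ℕ} (hm : m - 1 ≠ 0) :
    emultiplicity (p : ℤ_[p]) ((m : ℤ_[p]) - 1) = padicValNat p (m - 1) := by
  have key (n : ℕ) : (p : ℤ_[p]) ^ n ∣ (m : ℤ_[p]) - 1 ↔ p ^ n ∣ m - 1 := by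
    rw [← Nat.cast_one, pow_dvd_natCast_sub_natCast_iff, Nat.ModEq.comm,
      Nat.modEq_iff_dvd' (by omega)]
  rw [emultiplicity_eq_coe, key, key]
  exact ⟨pow_padicValNat_dvd, pow_succ_padicValNat_not_dvd hm⟩

theorem not_p_dvd_iff_isUnit {x : ℤ_[p]} : ¬ (p : ℤ_[p]) ∣ x ↔ IsUnit x := by
  rw [← norm_lt_one_iff_dvd, ← not_isUnit_iff, not_not]

theorem isUnit_of_p_dvd_sub_one {u : ℤ_[p]} (hu : (p : ℤ_[p]) ∣ u - 1) : IsUnit u :=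
  not_p_dvd_iff_isUnit.mp fun h => prime_p.not_dvd_one ((dvd_iff_dvd_of_dvd_sub hu).mp h)

theorem isClopen_setOf_pow_dvd_sub (n : ℕ) (c : ℤ_[p]) :
    IsClopen {x : ℤ_[p] | (p : ℤ_[p]) ^ n ∣ x - c} := by
  have hp : (p : ℝ) ≠ 0 := Nat.cast_ne_zero.mpr (Fact.out : p.Prime).ne_zero
  convert IsUltrametricDist.isClopen_closedBall c (zpow_ne_zero (-(n : ℤ)) hp) using 1
  ext x
  rw [Set.mem_ofPred_eq, Metric.mem_closedBall, dist_eq_norm, norm_le_pow_iff_mem_span_pow,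
    Ideal.mem_span_singleton]

theorem mem_closure_of_forall_pow_dvd_sub {s : Set ℤ_[p]} {y : ℤ_[p]}
    (h : ∀ n : ℕ, ∃ x ∈ s, (p : ℤ_[p]) ^ n ∣ x - y) : y ∈ closure s := by
  rw [Metric.mem_closure_iff]
  intro δ hδ
  obtain ⟨n, hn⟩ := exists_pow_neg_lt p hδ
  obtain ⟨x, hx, hdvd⟩ := h n
  refine ⟨x, hx, lt_of_le_of_lt ?_ hn⟩
  rwa [dist_comm, dist_eq_norm, norm_le_pow_iff_mem_span_pow, Ideal.mem_span_singleton]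

theorem emultiplicity_pow_sub_one (hp : Odd p) {u : ℤ_[p]} (hu : (p : ℤ_[p]) ∣ u - 1)
    {n : ℕ} (hn : n ≠ 0) :
    emultiplicity (p : ℤ_[p]) (u ^ n - 1) =
      emultiplicity (p : ℤ_[p]) (u - 1) + padicValNat p n := by
  obtain ⟨k, hk⟩ : p ^ padicValNat p n ∣ n := pow_padicValNat_dvd
  set s := padicValNat p n
  have hkp : ¬ (p : ℤ_[p]) ∣ k := fun h => by
    obtain ⟨c, hc⟩ := p_dvd_natCast_iff.mp h
    exact pow_succ_padicValNat_not_dvd hn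
      (show p ^ (s + 1) ∣ n from ⟨c, by rw [hk, hc]; ring⟩)
  have hu' : ¬ (p : ℤ_[p]) ∣ u := not_p_dvd_iff_isUnit.mpr (isUnit_of_p_dvd_sub_one hu)
  have hps := emultiplicity_pow_prime_pow_sub_pow_prime_pow prime_p hp (y := 1) hu hu' s
  have hk' := emultiplicity_pow_sub_pow_of_prime prime_p (x := u ^ p ^ s) (y := 1)
    (hu.trans (sub_one_dvd_pow_sub_one u _)) (fun h => hu' (prime_p.dvd_of_dvd_pow h)) hkp
  simp only [one_pow] at hps hk'
  rw [hk, pow_mul, hk', hps]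

theorem pow_dvd_pow_sub_one (hp : Odd p) {u : ℤ_[p]} {e s k : ℕ} (he : 1 ≤ e)
    (hu : (p : ℤ_[p]) ^ e ∣ u - 1) (hk : p ^ s ∣ k) :
    (p : ℤ_[p]) ^ (e + s) ∣ u ^ k - 1 := by
  rcases eq_or_ne k 0 with rfl | hk0
  · simp
  rw [pow_dvd_iff_le_emultiplicity, emultiplicity_pow_sub_one hp
    ((dvd_pow_self _ (by omega)).trans hu) hk0, Nat.cast_add]
  exact add_le_add (le_emultiplicity_of_pow_dvd hu)
    (Nat.cast_le.mpr ((padicValNat_dvd_iff_le hk0).mp hk))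

theorem pow_dvd_pow_sub_pow_of_modEq (hp : Odd p) {u : ℤ_[p]} {e s j j' : ℕ} (he : 1 ≤ e)
    (hu : (p : ℤ_[p]) ^ e ∣ u - 1) (h : j ≡ j' [MOD p ^ s]) :
    (p : ℤ_[p]) ^ (e + s) ∣ u ^ j - u ^ j' := by
  wlog hle : j' ≤ j generalizing j j'
  · rw [← dvd_neg, neg_sub]
    exact this h.symm (by omega)
  obtain ⟨k, rfl⟩ : ∃ k, j = j' + k := ⟨j - j', by omega⟩
  have hk : p ^ s ∣ k := by simpa using (Nat.modEq_iff_dvd' hle).mp h.symm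
  rw [pow_add u, ← mul_sub_one]
  exact dvd_mul_of_dvd_right (pow_dvd_pow_sub_one hp he hu hk) _

theorem not_pow_dvd_pow_sub_one (hp : Odd p) {g : ℤ_[p]} {E R d : ℕ} (hE : 1 ≤ E)
    (hg : emultiplicity (p : ℤ_[p]) (g - 1) = E) (hd0 : d ≠ 0) (hd : d < p ^ R) :
    ¬ (p : ℤ_[p]) ^ (E + R) ∣ g ^ d - 1 := by
  have hg1 : (p : ℤ_[p]) ∣ g - 1 := dvd_of_emultiplicity_pos (by rw [hg]; exact_mod_cast hE)
  have hval : padicValNat p d < R := by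
    have hle := Nat.le_of_dvd (Nat.pos_of_ne_zero hd0) (pow_padicValNat_dvd (p := p) (n := d))
    exact (Nat.pow_lt_pow_iff_right (Fact.out : p.Prime).one_lt).mp (hle.trans_lt hd)
  rw [pow_dvd_iff_le_emultiplicity, emultiplicity_pow_sub_one hp hg1 hd0, hg]
  exact_mod_cast (by omega : ¬ E + R ≤ E + padicValNat p d)

theorem eq_of_pow_dvd_pow_sub_pow (hp : Odd p) {g : ℤ_[p]} {E R a b : ℕ} (hE : 1 ≤ E)
    (hg : emultiplicity (p : ℤ_[p]) (g - 1) = E) (ha : a < p ^ R) (hb : b < p ^ R)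
    (h : (p : ℤ_[p]) ^ (E + R) ∣ g ^ a - g ^ b) : a = b := by
  wlog hba : b ≤ a generalizing a b
  · exact (this hb ha (by rwa [← dvd_neg, neg_sub]) (by omega)).symm
  by_contra hne
  have hunit : IsUnit g :=
    isUnit_of_p_dvd_sub_one (dvd_of_emultiplicity_pos (by rw [hg]; exact_mod_cast hE))
  refine not_pow_dvd_pow_sub_one hp hE hg (R := R) (d := a - b) (by omega) (by omega) ?_
  rwa [← (hunit.pow b).dvd_mul_left, mul_sub_one, ← pow_add, Nat.add_sub_cancel' hba]

theorem exists_pow_dvd_pow_sub_one_add_mul (hp : Odd p) {g : ℤ_[p]} {E : ℕ} (hE : 1 ≤ E)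
    (hg : emultiplicity (p : ℤ_[p]) (g - 1) = E) (z : ℤ_[p]) (R : ℕ) :
    ∃ j, (p : ℤ_[p]) ^ (E + R) ∣ g ^ j - (1 + p ^ E * z) := by
  have hgE : (p : ℤ_[p]) ^ E ∣ g - 1 := pow_dvd_of_le_emultiplicity hg.ge
  choose w hw using fun j : ℕ => hgE.trans (sub_one_dvd_pow_sub_one g j)
  have hcancel (a b : ℤ_[p]) :
      (p : ℤ_[p]) ^ (E + R) ∣ p ^ E * a - p ^ E * b ↔ toZModPow R a = toZModPow R b := by
    rw [← mul_sub, pow_add, mul_dvd_mul_iff_left (pow_ne_zero _ prime_p.ne_zero),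
      pow_dvd_sub_iff_toZModPow_eq]
  have hinj : Function.Injective fun j : Fin (p ^ R) => toZModPow R (w j) := by
    intro j j' h
    refine Fin.ext (eq_of_pow_dvd_pow_sub_pow hp hE hg j.isLt j'.isLt ?_)
    rwa [← sub_sub_sub_cancel_right _ _ 1, hw, hw, hcancel]
  obtain ⟨j, hj⟩ := ((Fintype.bijective_iff_injective_and_card _).mpr
    ⟨hinj, by simp⟩).surjective (toZModPow R z)
  refine ⟨j, ?_⟩
  rwa [← sub_sub, hw, hcancel]

theorem exists_pow_pow_dvd_sub (hp : Odd p) {m t e : ℕ} (hm : padicValNat p (m - 1) = t)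
    (ht : 1 ≤ t) (he : 1 ≤ e) {u v : ℤ_[p]} (hu : emultiplicity (p : ℤ_[p]) (u - 1) = e)
    (huv : (p : ℤ_[p]) ^ (e + t) ∣ v - u) (K : ℕ) :
    ∃ n, (p : ℤ_[p]) ^ K ∣ u ^ m ^ n - v := by
  have hm1 : m - 1 ≠ 0 := fun h => by simp [h] at hm; omega
  have hmt : emultiplicity (p : ℤ_[p]) ((m : ℤ_[p]) - 1) = t :=
    hm ▸ emultiplicity_natCast_sub_one hm1
  have hu1 : (p : ℤ_[p]) ^ e ∣ u - 1 := pow_dvd_of_le_emultiplicity hu.ge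
  have hu0 : (p : ℤ_[p]) ∣ u - 1 := (dvd_pow_self _ (by omega)).trans hu1
  obtain ⟨u', hu'⟩ := (isUnit_of_p_dvd_sub_one hu0).exists_right_inv
  obtain ⟨c, hc⟩ := huv
  have hv : v = u * (1 + p ^ (e + t) * (c * u')) := by
    linear_combination hc - p ^ (e + t) * c * hu'
  have hg : emultiplicity (p : ℤ_[p]) (u ^ p ^ t - 1) = (e + t : ℕ) := by
    rw [emultiplicity_pow_sub_one hp hu0 (pow_ne_zero _ (Fact.out : p.Prime).ne_zero), hu,
      padicValNat.prime_pow, Nat.cast_add]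
  obtain ⟨j, hj⟩ := exists_pow_dvd_pow_sub_one_add_mul hp (by omega) hg (c * u') K
  obtain ⟨n, hn⟩ := exists_pow_dvd_pow_sub_one_add_mul hp ht hmt (j : ℤ_[p]) K
  have hmn : 1 ≤ m ^ n := Nat.one_le_pow n m (by omega)
  have hmod : m ^ n - 1 ≡ p ^ t * j [MOD p ^ (t + K)] := by
    have hcast : ((m ^ n - 1 : ℕ) : ℤ_[p]) - ((p ^ t * j : ℕ) : ℤ_[p]) =
        (m : ℤ_[p]) ^ n - (1 + p ^ t * j) := by
      push_cast [Nat.cast_sub hmn]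
      ring
    rwa [← pow_dvd_natCast_sub_natCast_iff, hcast]
  have hexp := pow_dvd_pow_sub_pow_of_modEq hp he hu1 hmod
  refine ⟨n, (pow_dvd_pow _ (by omega : K ≤ e + (t + K))).trans ?_⟩
  have hsplit : u ^ m ^ n - v = u * (u ^ (m ^ n - 1) - u ^ (p ^ t * j)) +
      u * ((u ^ p ^ t) ^ j - (1 + p ^ (e + t) * (c * u'))) := by
    have hpow : u ^ m ^ n = u * u ^ (m ^ n - 1) := by
      rw [← pow_succ', Nat.sub_add_cancel hmn]
    rw [hv, hpow, ← pow_mul]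
    ring
  rw [hsplit]
  refine dvd_add (dvd_mul_of_dvd_right hexp _) (dvd_mul_of_dvd_right ?_ _)
  exact (pow_dvd_pow _ (by omega)).trans hj

theorem pow_dvd_sub_of_pow_dvd_sub_add_pow_mul {x ε N : ℤ_[p]} {t l : ℕ}
    (hx : (p : ℤ_[p]) ^ (t + l + 1) ∣ x - (ε + p ^ (l + 1) * N)) :
    (p : ℤ_[p]) ^ (l + 1) ∣ x - ε := by
  rw [show x - ε = (x - (ε + p ^ (l + 1) * N)) + p ^ (l + 1) * N by ring]
  exact dvd_add ((pow_dvd_pow _ (by omega)).trans hx) (dvd_mul_right _ _)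

theorem emultiplicity_sub_eq_of_pow_dvd_sub {x ε N : ℤ_[p]} {k K : ℕ}
    (hN : ¬ (p : ℤ_[p]) ∣ N) (hkK : k < K) (h : (p : ℤ_[p]) ^ K ∣ x - (ε + p ^ k * N)) :
    emultiplicity (p : ℤ_[p]) (x - ε) = k := by
  have hr : (p : ℤ_[p]) ^ (k + 1) ∣ x - (ε + p ^ k * N) := (pow_dvd_pow _ hkK).trans h
  rw [emultiplicity_eq_coe, show x - ε = p ^ k * N + (x - (ε + p ^ k * N)) by ring]
  refine ⟨dvd_add (dvd_mul_right _ _) ((pow_dvd_pow _ k.le_succ).trans hr), fun hdvd => hN ?_⟩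
  rwa [dvd_add_left hr, pow_succ, mul_dvd_mul_iff_left (pow_ne_zero _ prime_p.ne_zero)] at hdvd

theorem eq_of_p_dvd_sub (hp : Odd p) {ε ε' : ℤ_[p]} (hε : ε = 1 ∨ ε = -1)
    (hε' : ε' = 1 ∨ ε' = -1) (h : (p : ℤ_[p]) ∣ ε - ε') : ε = ε' := by
  have hp2 : ¬ (p : ℤ_[p]) ∣ (2 : ℕ) := fun h2 => by
    have := (Nat.prime_dvd_prime_iff_eq Fact.out Nat.prime_two).mp (p_dvd_natCast_iff.mp h2)
    subst this
    exact absurd hp (by decide)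
  rcases hε with rfl | rfl <;> rcases hε' with rfl | rfl
  · rfl
  · exact absurd (by norm_num at h ⊢; exact h) hp2
  · exact absurd (by norm_num at h ⊢; exact h) hp2
  · rfl

theorem exists_pow_dvd_sub_add_pow_mul {t : ℕ} (ht : 1 ≤ t) {x ε : ℤ_[p]} (hne : x ≠ ε)
    (h : (p : ℤ_[p]) ∣ x - ε) :
    ∃ l N : ℕ, ¬ p ∣ N ∧ N < p ^ t ∧
      (p : ℤ_[p]) ^ (t + l + 1) ∣ x - (ε + p ^ (l + 1) * N) := by
  have h0 : x - ε ≠ 0 := sub_ne_zero.mpr hne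
  set c : ℤ_[p] := (unitCoeff h0 : ℤ_[p])
  have hc : ¬ (p : ℤ_[p]) ∣ c := not_p_dvd_iff_isUnit.mpr (unitCoeff h0).isUnit
  have hspec : x - ε = c * p ^ (x - ε).valuation := unitCoeff_spec h0
  obtain ⟨l, hl⟩ : ∃ l, (x - ε).valuation = l + 1 := by
    refine Nat.exists_eq_add_one.mpr (Nat.pos_of_ne_zero fun hv => hc ?_)
    rwa [hspec, hv, pow_zero, mul_one] at h
  have happr : (p : ℤ_[p]) ^ t ∣ c - c.appr t := Ideal.mem_span_singleton.mp (appr_spec t c)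
  refine ⟨l, c.appr t, fun hN => hc ?_, appr_lt c t, ?_⟩
  · exact (dvd_sub_left (p_dvd_natCast_iff.mpr hN)).mp ((dvd_pow_self _ (by omega)).trans happr)
  · rw [show x - (ε + p ^ (l + 1) * (c.appr t : ℤ_[p])) = p ^ (l + 1) * (c - c.appr t) by
      rw [← hl]; linear_combination hspec, show t + l + 1 = l + 1 + t by omega, pow_add]
    exact mul_dvd_mul_left _ happr

theorem pow_dvd_pow_sub_add_pow_mul (hp : Odd p) {ε x N : ℤ_[p]} {m t l : ℕ}
    (hε : ε * ε = 1) (hm : Odd m) (hmt : p ^ t ∣ m - 1)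
    (hx : (p : ℤ_[p]) ^ (t + l + 1) ∣ x - (ε + p ^ (l + 1) * N)) :
    (p : ℤ_[p]) ^ (t + l + 1) ∣ x ^ m - (ε + p ^ (l + 1) * N) := by
  obtain ⟨u, rfl⟩ : ∃ u, x = ε * u := ⟨ε * x, by rw [← mul_assoc, hε, one_mul]⟩
  obtain ⟨k, rfl⟩ : ∃ k, m = k + 1 := ⟨m - 1, by have := hm.pos; omega⟩
  have hu : (p : ℤ_[p]) ^ (l + 1) ∣ u - 1 := by
    rw [show u - 1 = ε * (ε * u - ε) by linear_combination (1 - u) * hε]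
    exact dvd_mul_of_dvd_right (pow_dvd_sub_of_pow_dvd_sub_add_pow_mul hx) _
  have hsplit : (ε * u) ^ (k + 1) - (ε + p ^ (l + 1) * N) =
      ε * u * (u ^ k - 1) + (ε * u - (ε + p ^ (l + 1) * N)) := by
    rw [mul_pow, pow_eq_self_of_mul_self_eq_one hε hm]
    ring
  rw [hsplit]
  refine dvd_add (dvd_mul_of_dvd_right ?_ _) hx
  simpa only [show t + l + 1 = l + 1 + t by omega] using
    pow_dvd_pow_sub_one hp (by omega) hu (by simpa using hmt)

theorem mem_closure_range_pow_pow (hp : Odd p) {ε x y N : ℤ_[p]} {m t l : ℕ}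
    (hε : ε * ε = 1) (hm : Odd m) (hmt : padicValNat p (m - 1) = t) (ht : 1 ≤ t)
    (hN : ¬ (p : ℤ_[p]) ∣ N) (hx : (p : ℤ_[p]) ^ (t + l + 1) ∣ x - (ε + p ^ (l + 1) * N))
    (hy : (p : ℤ_[p]) ^ (t + l + 1) ∣ y - (ε + p ^ (l + 1) * N)) :
    y ∈ closure (Set.range fun n : ℕ => x ^ m ^ n) := by
  have hεu : IsUnit ε := IsUnit.of_mul_eq_one ε hε
  obtain ⟨u, rfl⟩ : ∃ u, x = ε * u := ⟨ε * x, by rw [← mul_assoc, hε, one_mul]⟩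
  obtain ⟨v, rfl⟩ : ∃ v, y = ε * v := ⟨ε * y, by rw [← mul_assoc, hε, one_mul]⟩
  have hu : emultiplicity (p : ℤ_[p]) (u - 1) = (l + 1 : ℕ) := by
    rw [show u - 1 = ε * (ε * u - ε) by linear_combination (1 - u) * hε,
      emultiplicity_eq_of_associated_right (associated_unit_mul_left _ _ hεu)]
    exact emultiplicity_sub_eq_of_pow_dvd_sub hN (by omega) hx
  have huv : (p : ℤ_[p]) ^ (l + 1 + t) ∣ v - u := by
    rw [← hεu.dvd_mul_left, mul_sub, show l + 1 + t = t + l + 1 by omega]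
    simpa only [sub_sub_sub_cancel_right] using dvd_sub hy hx
  refine mem_closure_of_forall_pow_dvd_sub fun K => ?_
  obtain ⟨n, hn⟩ := exists_pow_pow_dvd_sub hp hmt ht (by omega) hu huv K
  refine ⟨_, ⟨n, rfl⟩, ?_⟩
  dsimp only
  rw [mul_pow, pow_eq_self_of_mul_self_eq_one hε hm.pow, ← mul_sub]
  exact dvd_mul_of_dvd_right hn _

theorem not_p_dvd_of_p_dvd_sub {x ε : ℤ_[p]} (hε : ε = 1 ∨ ε = -1)
    (h : (p : ℤ_[p]) ∣ x - ε) : ¬ (p : ℤ_[p]) ∣ x := by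
  rw [dvd_iff_dvd_of_dvd_sub h, not_p_dvd_iff_isUnit]
  rcases hε with rfl | rfl
  exacts [isUnit_one, isUnit_one.neg]

theorem eq_of_pow_dvd_sub_of_pow_dvd_sub (hp : Odd p) {x ε ε' : ℤ_[p]} {t l l' N N' : ℕ}
    (hε : ε = 1 ∨ ε = -1) (hε' : ε' = 1 ∨ ε' = -1) (hN : ¬ p ∣ N) (hN' : ¬ p ∣ N')
    (hNt : N < p ^ t) (hN't : N' < p ^ t)
    (hx : (p : ℤ_[p]) ^ (t + l + 1) ∣ x - (ε + p ^ (l + 1) * N))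
    (hx' : (p : ℤ_[p]) ^ (t + l' + 1) ∣ x - (ε' + p ^ (l' + 1) * N')) :
    l = l' ∧ N = N' ∧ ε = ε' := by
  have ht : t ≠ 0 := by
    rintro rfl
    exact hN (by rw [pow_zero, Nat.lt_one_iff] at hNt; simp [hNt])
  have hv := emultiplicity_sub_eq_of_pow_dvd_sub (p_dvd_natCast_iff.not.mpr hN) (by omega) hx
  have hv' := emultiplicity_sub_eq_of_pow_dvd_sub (p_dvd_natCast_iff.not.mpr hN') (by omega) hx'
  have hdvd := (dvd_pow_self (p : ℤ_[p]) l.succ_ne_zero).trans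
    (pow_dvd_sub_of_pow_dvd_sub_add_pow_mul hx)
  have hdvd' := (dvd_pow_self (p : ℤ_[p]) l'.succ_ne_zero).trans
    (pow_dvd_sub_of_pow_dvd_sub_add_pow_mul hx')
  obtain rfl : ε = ε' := eq_of_p_dvd_sub hp hε hε' <| by
    simpa only [sub_sub_sub_cancel_left] using dvd_sub hdvd' hdvd
  obtain rfl : l = l' := Nat.succ_injective (by exact_mod_cast hv.symm.trans hv')
  refine ⟨rfl, Nat.ModEq.eq_of_lt_of_lt ?_ hNt hN't, rfl⟩
  rw [← pow_dvd_natCast_sub_natCast_iff, ← mul_dvd_mul_iff_left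
    (pow_ne_zero (l + 1) (prime_p (p := p)).ne_zero), ← pow_add, add_comm (l + 1), ← add_assoc]
  convert dvd_sub hx' hx using 1
  ring

end PadicInt

theorem PadicInt.exists_three_dvd_sub_of_not_three_dvd {x : ℤ_[3]} (hx : ¬ (3 : ℤ_[3]) ∣ x) :
    ∃ ε : ℤ_[3], (ε = 1 ∨ ε = -1) ∧ (3 : ℤ_[3]) ∣ x - ε := by
  have key (y : ℤ_[3]) : (3 : ℤ_[3]) ∣ x - y ↔ toZModPow 1 x = toZModPow 1 y := by
    simpa using pow_dvd_sub_iff_toZModPow_eq (x := x) (y := y) (n := 1)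
  have h0 : toZModPow 1 x ≠ 0 := fun h =>
    hx (by simpa using (key 0).mpr (by rw [h, map_zero]))
  have hres : ∀ r : ZMod (3 ^ 1), r ≠ 0 → r = 1 ∨ r = -1 := by decide
  rcases hres _ h0 with h | h
  · exact ⟨1, Or.inl rfl, (key 1).mpr (by rw [h, map_one])⟩
  · exact ⟨-1, Or.inr rfl, (key (-1)).mpr (by rw [h, map_neg, map_one])⟩

theorem not_three_dvd_and_lt_three_pow_iff {t N : ℕ} (ht : 1 ≤ t) :
    ¬ 3 ∣ N ∧ N < 3 ^ t ↔
      ∃ a < 3 ^ (t - 1), ∃ i, (i = 1 ∨ i = 2) ∧ N = i + 3 * a := by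
  have h3t : 3 ^ t = 3 * 3 ^ (t - 1) := by rw [← pow_succ']; congr 1; omega
  constructor
  · exact fun h => ⟨N / 3, by omega, N % 3, by omega, by omega⟩
  · rintro ⟨a, ha, i, hi, rfl⟩
    omega

theorem PadicInt.iUnion_setOf_three_pow_dvd_sub_union_eq {t : ℕ} (ht : 1 ≤ t) :
    (⋃ l : ℕ, ⋃ a ∈ Finset.range (3 ^ (t - 1)), ⋃ i ∈ ({1, 2} : Set ℕ),
      ⋃ ε ∈ ({1, -1} : Set ℤ_[3]), {x : ℤ_[3] |
        (3 : ℤ_[3]) ^ (t + l + 1) ∣ x - (ε + 3 ^ (l + 1) * ((i + 3 * a : ℕ) : ℤ_[3]))})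
      ∪ {1, -1} = {x : ℤ_[3] | ¬ (3 : ℤ_[3]) ∣ x} := by
  ext x
  simp only [Set.mem_union, Set.mem_iUnion, Finset.mem_range, Set.mem_insert_iff,
    Set.mem_singleton_iff, Set.mem_ofPred_eq, exists_prop]
  constructor
  · rintro (⟨l, a, ha, i, hi, ε, hε, hx⟩ | hx)
    · exact not_p_dvd_of_p_dvd_sub hε ((dvd_pow_self _ l.succ_ne_zero).trans
        (pow_dvd_sub_of_pow_dvd_sub_add_pow_mul hx))
    · exact not_p_dvd_of_p_dvd_sub hx (by simp)
  · intro hx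
    obtain ⟨ε, hε, hxε⟩ := exists_three_dvd_sub_of_not_three_dvd hx
    by_cases hne : x = ε
    · exact Or.inr (hne ▸ hε)
    · obtain ⟨l, N, hN, hNt, hdvd⟩ := exists_pow_dvd_sub_add_pow_mul ht hne hxε
      obtain ⟨a, ha, i, hi, rfl⟩ := (not_three_dvd_and_lt_three_pow_iff ht).mp ⟨hN, hNt⟩
      exact Or.inl ⟨l, a, ha, i, hi, ε, hε, hdvd⟩

open PadicInt in
/-- Minimal decomposition for `x ↦ x^m` on `ℤ_3` with `m ≡ 1 (mod 6)`:
the sets `M_{l,a,i,ε} = ε + 3^(l+1)i + 3^(l+2)a + 3^(t+l+1)ℤ_3` are pairwise disjoint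
clopen minimal components, and together with `{1, -1}` they cover exactly the 3-adic
units. -/
theorem monomial_Z3_one_mod_six_decomposition (m : ℕ) (hm : 2 ≤ m) (hmod : m % 6 = 1)
    (t : ℕ) (ht : t = padicValNat 3 (m - 1))
    (M : ℕ → ℕ → ℕ → ℤ_[3] → Set ℤ_[3])
    (hM : ∀ l a i ε, M l a i ε =
      {x : ℤ_[3] | (3 : ℤ_[3]) ^ (t + l + 1) ∣
        x - (ε + 3 ^ (l + 1) * (i : ℤ_[3]) + 3 ^ (l + 2) * (a : ℤ_[3]))}) :
    (∀ l a i (ε : ℤ_[3]) l' a' i' (ε' : ℤ_[3]),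
      a < 3 ^ (t - 1) → a' < 3 ^ (t - 1) → (i = 1 ∨ i = 2) → (i' = 1 ∨ i' = 2) →
      (ε = 1 ∨ ε = -1) → (ε' = 1 ∨ ε' = -1) →
      (l, a, i, ε) ≠ (l', a', i', ε') → Disjoint (M l a i ε) (M l' a' i' ε')) ∧
    (∀ l a i (ε : ℤ_[3]), a < 3 ^ (t - 1) → (i = 1 ∨ i = 2) → (ε = 1 ∨ ε = -1) →
      IsClopen (M l a i ε) ∧
      (∀ x ∈ M l a i ε, x ^ m ∈ M l a i ε) ∧
      (∀ x ∈ M l a i ε, M l a i ε ⊆ closure (Set.range fun n : ℕ => x ^ m ^ n))) ∧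
    ((⋃ l : ℕ, ⋃ a ∈ Finset.range (3 ^ (t - 1)), ⋃ i ∈ ({1, 2} : Set ℕ),
        ⋃ ε ∈ ({1, -1} : Set ℤ_[3]), M l a i ε)
        ∪ {1, -1} = {x : ℤ_[3] | ¬ (3 : ℤ_[3]) ∣ x}) := by
  have hp : Odd 3 := by decide
  have ht1 : 1 ≤ t := ht ▸ one_le_padicValNat_of_dvd (by omega) (by omega)
  have hmo : Odd m := Nat.odd_iff.mpr (by omega)
  have hM' (l a i ε) : M l a i ε = {x : ℤ_[3] |
      (3 : ℤ_[3]) ^ (t + l + 1) ∣ x - (ε + 3 ^ (l + 1) * ((i + 3 * a : ℕ) : ℤ_[3]))} := by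
    rw [hM]
    congr! 4
    push_cast
    ring
  refine ⟨fun l a i ε l' a' i' ε' ha ha' hi hi' hε hε' hne => ?_,
    fun l a i ε ha hi hε => ?_,
    by simpa only [hM'] using iUnion_setOf_three_pow_dvd_sub_union_eq ht1⟩
  · have hN := (not_three_dvd_and_lt_three_pow_iff ht1).mpr ⟨a, ha, i, hi, rfl⟩
    have hN' := (not_three_dvd_and_lt_three_pow_iff ht1).mpr ⟨a', ha', i', hi', rfl⟩
    rw [hM', hM', Set.disjoint_left]
    refine fun x hx hx' => hne ?_
    obtain ⟨rfl, hNN', rfl⟩ :=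
      eq_of_pow_dvd_sub_of_pow_dvd_sub hp hε hε' hN.1 hN'.1 hN.2 hN'.2 hx hx'
    obtain ⟨rfl, rfl⟩ : i = i' ∧ a = a' := by omega
    rfl
  · have hε2 : ε * ε = 1 := by rcases hε with rfl | rfl <;> norm_num
    have hN := p_dvd_natCast_iff.not.mpr
      ((not_three_dvd_and_lt_three_pow_iff ht1).mpr ⟨a, ha, i, hi, rfl⟩).1
    rw [hM']
    exact ⟨isClopen_setOf_pow_dvd_sub _ _,
      fun x hx => pow_dvd_pow_sub_add_pow_mul hp hε2 hmo (ht ▸ pow_padicValNat_dvd) hx,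
      fun x hx y hy => mem_closure_range_pow_pow hp hε2 hmo ht.symm ht1 hN hx hy⟩
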